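/- arXiv:2101.04661 — 5 statements merged into one kernel-verified Lean document; each statement's English description precedes it below -/
import Mathlib

section
/- Let θ > 0 and let g(x) = θ²(1+x)·exp(−θx)/(1+θ) be the Lindley(θ) density. Then ∫₀¹ g(v)·g(1−v) dv = (13/6)·exp(−θ)·θ⁴/(1+θ)², and for every u with 0 < u < 1, g(u)·g(1−u) / ∫₀¹ g(v)·g(1−v) dv = (6/13)·(2−u)·(1+u), which does not depend on θ. -/
/-!
Writing `g` for the Lindley density, `e^{-θv} e^{-θ(1-v)} = e^{-θ}`, so
`g v * g (1 - v) = e^{-θ} θ⁴ / (1 + θ)² * (2 - v) * (1 + v)`: all dependence on `θ` sits in a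
constant factor, which multiplies `∫₀¹ (2 - v)(1 + v) dv = 13/6` in the normalizer and cancels
in the conditional density.
-/

open MeasureTheory Real

noncomputable def lindleyPDF (θ x : ℝ) : ℝ :=
  θ ^ 2 * (1 + x) * exp (-θ * x) / (1 + θ)

theorem lindleyPDF_mul_lindleyPDF_one_sub (θ v : ℝ) :
    lindleyPDF θ v * lindleyPDF θ (1 - v) =
      exp (-θ) * θ ^ 4 / (1 + θ) ^ 2 * ((2 - v) * (1 + v)) := by
  have hexp : exp (-θ * v) * exp (-θ * (1 - v)) = exp (-θ) := by
    rw [← exp_add]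
    ring_nf
  unfold lindleyPDF
  rw [div_mul_div_comm, ← hexp]
  ring

theorem integral_two_sub_mul_one_add : ∫ v in (0 : ℝ)..1, (2 - v) * (1 + v) = 13 / 6 := by
  have hpoly : (fun v : ℝ => (2 - v) * (1 + v)) = fun v => 2 + v - v ^ 2 := by
    funext v
    ring
  have hcont {f : ℝ → ℝ} (hf : Continuous f) : IntervalIntegrable f volume 0 1 :=
    hf.intervalIntegrable 0 1
  rw [hpoly, intervalIntegral.integral_sub (hcont (by fun_prop)) (hcont (by fun_prop)),
    intervalIntegral.integral_add (hcont (by fun_prop)) (hcont (by fun_prop)), integral_pow,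
    integral_id, intervalIntegral.integral_const]
  norm_num

theorem integral_lindleyPDF_mul_lindleyPDF_one_sub (θ : ℝ) :
    ∫ v in (0 : ℝ)..1, lindleyPDF θ v * lindleyPDF θ (1 - v) =
      13 / 6 * exp (-θ) * θ ^ 4 / (1 + θ) ^ 2 := by
  simp_rw [lindleyPDF_mul_lindleyPDF_one_sub, intervalIntegral.integral_const_mul,
    integral_two_sub_mul_one_add]
  ring

theorem lindley_lindley_conditional (θ : ℝ) (hθ : 0 < θ) :
    (∫ v in (0:ℝ)..1,
        (θ ^ 2 * (1 + v) * Real.exp (-θ * v) / (1 + θ)) *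
        (θ ^ 2 * (1 + (1 - v)) * Real.exp (-θ * (1 - v)) / (1 + θ)))
      = (13 / 6) * Real.exp (-θ) * θ ^ 4 / (1 + θ) ^ 2 ∧
    ∀ u : ℝ, 0 < u → u < 1 →
      ((θ ^ 2 * (1 + u) * Real.exp (-θ * u) / (1 + θ)) *
        (θ ^ 2 * (1 + (1 - u)) * Real.exp (-θ * (1 - u)) / (1 + θ))) /
      (∫ v in (0:ℝ)..1,
        (θ ^ 2 * (1 + v) * Real.exp (-θ * v) / (1 + θ)) *
        (θ ^ 2 * (1 + (1 - v)) * Real.exp (-θ * (1 - v)) / (1 + θ)))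
      = (6 / 13) * (2 - u) * (1 + u) := by
  change ∫ v in (0:ℝ)..1, lindleyPDF θ v * lindleyPDF θ (1 - v) = _ ∧
    ∀ u : ℝ, 0 < u → u < 1 → lindleyPDF θ u * lindleyPDF θ (1 - u) /
      ∫ v in (0:ℝ)..1, lindleyPDF θ v * lindleyPDF θ (1 - v) = _
  refine ⟨integral_lindleyPDF_mul_lindleyPDF_one_sub θ, fun u _ _ => ?_⟩
  rw [integral_lindleyPDF_mul_lindleyPDF_one_sub, lindleyPDF_mul_lindleyPDF_one_sub]
  have hconst : exp (-θ) * θ ^ 4 / (1 + θ) ^ 2 ≠ 0 := by positivity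
  field_simp
end

section
/- Let θ > 0. For every u with 0 < u < 1, [θ·exp(−θu)] · [θ²(2−u)·exp(−θ(1−u))/(1+θ)] divided by ∫₀¹ [θ·exp(−θv)] · [θ²(2−v)·exp(−θ(1−v))/(1+θ)] dv equals (2/3)·(2−u), independently of θ. In particular ∫₀¹ (2/3)(2−u) du = 1, and the density (2/3)(2−u) decreases linearly from 4/3 at u = 0 to 2/3 at u = 1. -/
open MeasureTheory Real

theorem distribution5_density (θ : ℝ) (hθ : 0 < θ) :
    (∀ u : ℝ, 0 < u → u < 1 →
      ((θ * Real.exp (-θ * u)) * (θ ^ 2 * (2 - u) * Real.exp (-θ * (1 - u)) / (1 + θ))) /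
        (∫ v in (0:ℝ)..1,
          (θ * Real.exp (-θ * v)) * (θ ^ 2 * (2 - v) * Real.exp (-θ * (1 - v)) / (1 + θ)))
      = (2 / 3) * (2 - u)) ∧
    (∫ u in (0:ℝ)..1, (2 / 3) * (2 - u)) = 1 ∧
    StrictAnti (fun u : ℝ => (2 / 3) * (2 - u)) ∧
    (2 / 3 : ℝ) * (2 - 0) = 4 / 3 ∧ (2 / 3 : ℝ) * (2 - 1) = 2 / 3 := by
  have h1θ : (0:ℝ) < 1 + θ := by linarith
  set C : ℝ := θ ^ 3 * Real.exp (-θ) / (1 + θ) with hCdef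
  have hCpos : 0 < C := by
    apply div_pos (mul_pos (pow_pos hθ 3) (Real.exp_pos _)) h1θ
  have hpt : ∀ v : ℝ,
      (θ * Real.exp (-θ * v)) * (θ ^ 2 * (2 - v) * Real.exp (-θ * (1 - v)) / (1 + θ))
        = C * (2 - v) := by
    intro v
    have : Real.exp (-θ * v) * Real.exp (-θ * (1 - v)) = Real.exp (-θ) := by
      rw [← Real.exp_add]; ring_nf
    have h2 : θ * Real.exp (-θ * v) * (θ ^ 2 * (2 - v) * Real.exp (-θ * (1 - v)))
        = θ ^ 3 * Real.exp (-θ) * (2 - v) := by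
      linear_combination (θ ^ 3 * (2 - v)) * this
    rw [hCdef, div_mul_eq_mul_div, ← h2]
    ring
  have hint : (∫ v in (0:ℝ)..1,
      (θ * Real.exp (-θ * v)) * (θ ^ 2 * (2 - v) * Real.exp (-θ * (1 - v)) / (1 + θ)))
      = C * (3 / 2) := by
    have : (∫ v in (0:ℝ)..1,
        (θ * Real.exp (-θ * v)) * (θ ^ 2 * (2 - v) * Real.exp (-θ * (1 - v)) / (1 + θ)))
        = ∫ v in (0:ℝ)..1, C * (2 - v) := by
      apply intervalIntegral.integral_congr
      intro v _; exact hpt v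
    rw [this, intervalIntegral.integral_const_mul]
    have : (∫ v in (0:ℝ)..1, (2 - v)) = 3 / 2 := by
      simp [intervalIntegral.integral_sub intervalIntegrable_const
        (intervalIntegral.intervalIntegrable_id)]
      norm_num
    rw [this]
  refine ⟨?_, ?_, ?_, by norm_num, by norm_num⟩
  · intro u hu0 hu1
    rw [hpt u, hint]
    field_simp
  · simp [intervalIntegral.integral_const_mul,
      intervalIntegral.integral_sub intervalIntegrable_const
        (intervalIntegral.intervalIntegrable_id)]
    norm_num
  · intro a b hab
    simp only
    nlinarith
end

section
/- Let θ > 0 and β > 0. For every u with 0 < u < 1, [θ²(1+u)·exp(−θu)/(1+θ)] · [θ^β (1−u)^{β−1}·exp(−θ(1−u))/Γ(β)] divided by ∫₀¹ [θ²(1+v)·exp(−θv)/(1+θ)] · [θ^β (1−v)^{β−1}·exp(−θ(1−v))/Γ(β)] dv equals β(1+β)/(2+β) · (1+u)·(1−u)^{β−1}, which does not depend on θ. -/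
open MeasureTheory Real

theorem lcg_density_from_lindley_gamma (θ β : ℝ) (hθ : 0 < θ) (hβ : 0 < β) :
    ∀ u : ℝ, 0 < u → u < 1 →
      ((θ ^ 2 * (1 + u) * Real.exp (-θ * u) / (1 + θ)) *
        (θ ^ β * (1 - u) ^ (β - 1) * Real.exp (-θ * (1 - u)) / Real.Gamma β)) /
      (∫ v in (0:ℝ)..1,
        (θ ^ 2 * (1 + v) * Real.exp (-θ * v) / (1 + θ)) *
        (θ ^ β * (1 - v) ^ (β - 1) * Real.exp (-θ * (1 - v)) / Real.Gamma β))
      = β * (1 + β) / (2 + β) * ((1 + u) * (1 - u) ^ (β - 1)) := by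
  intro u hu0 hu1
  have hΓ : 0 < Real.Gamma β := Real.Gamma_pos_of_pos hβ
  have hθβ : 0 < θ ^ β := Real.rpow_pos_of_pos hθ β
  set C : ℝ := θ ^ 2 * θ ^ β * Real.exp (-θ) / ((1 + θ) * Real.Gamma β) with hCdef
  have hC : 0 < C := by positivity
  have hfun : ∀ v : ℝ,
      (θ ^ 2 * (1 + v) * Real.exp (-θ * v) / (1 + θ)) *
        (θ ^ β * (1 - v) ^ (β - 1) * Real.exp (-θ * (1 - v)) / Real.Gamma β)
      = C * ((1 + v) * (1 - v) ^ (β - 1)) := by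
    intro v
    have he : Real.exp (-θ * v) * Real.exp (-θ * (1 - v)) = Real.exp (-θ) := by
      rw [← Real.exp_add]; congr 1; ring
    rw [div_mul_div_comm, hCdef, ← he, div_mul_eq_mul_div]
    congr 1
    ring
  -- compute ∫ (1-v)^p on [0,1]
  have hp : ∀ p : ℝ, -1 < p → (∫ v in (0:ℝ)..1, (1 - v) ^ p) = 1 / (p + 1) := by
    intro p hp
    have h := intervalIntegral.integral_comp_sub_left (a := (0:ℝ)) (b := 1)
      (fun x : ℝ => x ^ p) 1
    rw [h]
    norm_num
    rw [integral_rpow (Or.inl hp)]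
    rw [Real.one_rpow, Real.zero_rpow (by linarith)]
    norm_num
  have hx : ∀ x : ℝ, 0 ≤ x → x ^ β = x ^ (β - 1) * x := by
    intro x hx
    rcases eq_or_lt_of_le hx with h | h
    · rw [← h, Real.zero_rpow hβ.ne']; ring
    · rw [← Real.rpow_add_one h.ne', sub_add_cancel]
  have i1 : IntervalIntegrable (fun v : ℝ => (1 - v) ^ (β - 1)) volume 0 1 := by
    have := (intervalIntegral.intervalIntegrable_rpow'
      (a := (0:ℝ)) (b := 1) (by linarith : (-1:ℝ) < β - 1)).comp_sub_left 1
    simpa using this.symm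
  have i2 : IntervalIntegrable (fun v : ℝ => (1 - v) ^ β) volume 0 1 := by
    have := (intervalIntegral.intervalIntegrable_rpow'
      (a := (0:ℝ)) (b := 1) (by linarith : (-1:ℝ) < β)).comp_sub_left 1
    simpa using this.symm
  have hsplit : (∫ v in (0:ℝ)..1, (1 + v) * (1 - v) ^ (β - 1))
      = ∫ v in (0:ℝ)..1, (2 * (1 - v) ^ (β - 1) - (1 - v) ^ β) := by
    apply intervalIntegral.integral_congr
    intro v hv
    rw [Set.uIcc_of_le (by norm_num : (0:ℝ) ≤ 1)] at hv
    have h1v : 0 ≤ 1 - v := by linarith [hv.2]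
    simp only
    rw [hx _ h1v]; ring
  have hI : (∫ v in (0:ℝ)..1, (1 + v) * (1 - v) ^ (β - 1)) = (2 + β) / (β * (1 + β)) := by
    rw [hsplit, intervalIntegral.integral_sub (i1.const_mul 2) i2,
      intervalIntegral.integral_const_mul, hp _ (by linarith), hp _ (by linarith)]
    have hβ1 : β - 1 + 1 = β := by ring
    rw [hβ1]
    field_simp
    ring
  simp only [hfun]
  rw [intervalIntegral.integral_const_mul, hI,
    mul_div_mul_left _ _ hC.ne']
  rw [div_div_eq_mul_div]
  ring
end

section
/- Let β > 0. The hazard rate h(u) = β(1+β)(1+u) / ((2+β+uβ)(1−u)) of the LCG(β) distribution is strictly increasing on (0,1); that is, the LCG family has increasing failure rate. -/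
open MeasureTheory Real Set

theorem lcg_increasing_failure_rate (β : ℝ) (hβ : 0 < β) :
    StrictMonoOn
      (fun u : ℝ => β * (1 + β) * (1 + u) / ((2 + β + u * β) * (1 - u)))
      (Ioo 0 1) := by
  intro a ha b hb hab
  obtain ⟨ha0, ha1⟩ := ha
  obtain ⟨hb0, hb1⟩ := hb
  have hda : 0 < (2 + β + a * β) * (1 - a) := by nlinarith [mul_pos ha0 hβ]
  have hdb : 0 < (2 + β + b * β) * (1 - b) := by nlinarith [mul_pos hb0 hβ]
  simp only
  rw [div_lt_div_iff₀ hda hdb]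
  have hkey : β * (1 + β) * (1 + b) * ((2 + β + a * β) * (1 - a))
      - β * (1 + β) * (1 + a) * ((2 + β + b * β) * (1 - b))
      = β * (1 + β) * ((b - a) * (4 + β + β * (a + b) + β * (a * b))) := by ring
  have hpos : 0 < β * (1 + β) * ((b - a) * (4 + β + β * (a + b) + β * (a * b))) := by
    apply mul_pos (mul_pos hβ (by linarith))
    apply mul_pos (by linarith)
    nlinarith [mul_pos ha0 hb0, mul_pos (add_pos ha0 hb0) hβ]
  linarith
end

section
/- Let β > 0. The variance of the LCG(β) distribution is ∫₀¹ u² · [β(1+β)(1+u)(1−u)^{β−1}/(2+β)] du − ((4+β)/(2+β)²)² = β(16 + 9β + β²) / ((2+β)⁴(3+β)). -/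
open MeasureTheory Real intervalIntegral

lemma aux_int (γ : ℝ) (hγ : -1 < γ) :
    ∫ u in (0:ℝ)..1, (1 - u) ^ γ = 1 / (γ + 1) := by
  rw [intervalIntegral.integral_comp_sub_left (fun t => t ^ γ) 1]
  norm_num
  rw [integral_rpow (Or.inl hγ)]
  rw [Real.zero_rpow (by linarith), Real.one_rpow]
  ring

lemma aux_intg (γ : ℝ) (hγ : -1 < γ) :
    IntervalIntegrable (fun u : ℝ => (1 - u) ^ γ) volume 0 1 := by
  have := (intervalIntegrable_rpow' hγ (a := 0) (b := 1)).comp_sub_left 1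
  simpa using this.symm

theorem lcg_variance (β : ℝ) (hβ : 0 < β) :
    (∫ u in (0:ℝ)..1, u ^ 2 * (β * (1 + β) * (1 + u) * (1 - u) ^ (β - 1) / (2 + β)))
        - ((4 + β) / (2 + β) ^ 2) ^ 2
      = β * (16 + 9 * β + β ^ 2) / ((2 + β) ^ 4 * (3 + β)) := by
  have h1 : -1 < β - 1 := by linarith
  have h2 : -1 < β := by linarith
  have h3 : -1 < β + 1 := by linarith
  have h4 : -1 < β + 2 := by linarith
  have key : (∫ u in (0:ℝ)..1, u ^ 2 * (β * (1 + β) * (1 + u) * (1 - u) ^ (β - 1) / (2 + β)))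
      = (β * (1 + β) / (2 + β)) *
        (2 * (1 / (β - 1 + 1)) - 5 * (1 / (β + 1)) + 4 * (1 / (β + 1 + 1)) - 1 / (β + 2 + 1)) := by
    have hcong : ∀ u ∈ Set.uIcc (0:ℝ) 1,
        u ^ 2 * (β * (1 + β) * (1 + u) * (1 - u) ^ (β - 1) / (2 + β))
          = (β * (1 + β) / (2 + β)) *
            (2 * (1 - u) ^ (β - 1) - 5 * (1 - u) ^ β + 4 * (1 - u) ^ (β + 1) - (1 - u) ^ (β + 2)) := by
      intro u hu
      rw [Set.uIcc_of_le (by norm_num : (0:ℝ) ≤ 1)] at hu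
      rcases lt_or_eq_of_le hu.2 with hlt | heq
      · have ht : (0:ℝ) < 1 - u := by linarith
        have e1 : (1 - u) ^ β = (1 - u) ^ (β - 1) * (1 - u) := by
          rw [← Real.rpow_add_one ht.ne' (β - 1)]; ring_nf
        have e2 : (1 - u) ^ (β + 1) = (1 - u) ^ β * (1 - u) :=
          Real.rpow_add_one ht.ne' β
        have e3 : (1 - u) ^ (β + 2) = (1 - u) ^ (β + 1) * (1 - u) := by
          rw [← Real.rpow_add_one ht.ne' (β + 1)]; ring_nf
        rw [e3, e2, e1]; ring
      · subst heq
        norm_num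
        rw [Real.zero_rpow hβ.ne', Real.zero_rpow (by linarith : β + 1 ≠ 0),
          Real.zero_rpow (by linarith : β + 2 ≠ 0)]
        ring
    rw [intervalIntegral.integral_congr hcong, intervalIntegral.integral_const_mul]
    congr 1
    rw [intervalIntegral.integral_sub
        ((((aux_intg _ h1).const_mul 2).sub ((aux_intg _ h2).const_mul 5)).add
          ((aux_intg _ h3).const_mul 4)) (aux_intg _ h4),
      intervalIntegral.integral_add
        (((aux_intg _ h1).const_mul 2).sub ((aux_intg _ h2).const_mul 5))
        ((aux_intg _ h3).const_mul 4),
      intervalIntegral.integral_sub ((aux_intg _ h1).const_mul 2) ((aux_intg _ h2).const_mul 5),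
      intervalIntegral.integral_const_mul, intervalIntegral.integral_const_mul,
      intervalIntegral.integral_const_mul, aux_int _ h1, aux_int _ h2, aux_int _ h3, aux_int _ h4]
  rw [key]
  have n1 : β - 1 + 1 ≠ 0 := by linarith
  have n2 : β + 1 ≠ 0 := by linarith
  have n3 : β + 1 + 1 ≠ 0 := by linarith
  have n4 : β + 2 + 1 ≠ 0 := by linarith
  have n5 : (2 : ℝ) + β ≠ 0 := by linarith
  have n6 : (3 : ℝ) + β ≠ 0 := by linarith
  field_simp
  ring
end
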